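/- Let A be a unital C*-algebra and π : A → B(H) a bounded, unital, injective algebra homomorphism whose range π(A) is norm-closed in B(H). Then for every n ≥ 1 and every self-adjoint D ∈ M_n(A), the element ‖π⁽ⁿ⁾(D)‖·1 + D is positive in the C*-algebra M_n(A), where π⁽ⁿ⁾((x_ij)) = (π(x_ij)) and the norm is that of B(Hⁿ). -/

import Mathlib

/-! The amplification `Φ = matCLM ∘ π⁽ⁿ⁾ : Mₙ(A) → B(Hⁿ)` is an injective algebra homomorphism
whose range, the operator matrices all of whose entries lie in the closed set `π(A)`, is closed.
A self-adjoint `D` in the C⋆-algebra `Mₙ(A)` has real spectrum, which therefore has empty interior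
and coincides with its boundary; and the boundary of the spectrum relative to a closed subalgebra
lies in the spectrum in the ambient Banach algebra. Hence `σ(D) ⊆ σ(Φ D)`, whose elements have
modulus at most `‖Φ D‖`, so `‖Φ D‖ + σ(D) ⊆ [0, ∞)`. -/

open scoped ComplexOrder
open Matrix

noncomputable section

instance PiLp.instCompleteSpace' {p : ENNReal} {ι : Type*} {β : ι → Type*}
    [∀ i, UniformSpace (β i)] [∀ i, CompleteSpace (β i)] : CompleteSpace (PiLp p β) :=
  inferInstance

/-- The bounded operator on the Hilbert space `Hⁿ` (modeled as `PiLp 2`) associated with an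
`n × n` matrix of bounded operators on `H`, via `(T v) i = ∑ j, T i j (v j)`. -/
def matCLM {H : Type*} [NormedAddCommGroup H] [InnerProductSpace ℂ H] {n : ℕ}
    (T : Matrix (Fin n) (Fin n) (H →L[ℂ] H)) :
    (PiLp 2 fun _ : Fin n => H) →L[ℂ] PiLp 2 fun _ : Fin n => H :=
  ((PiLp.continuousLinearEquiv 2 ℂ fun _ : Fin n => H).symm.toContinuousLinearMap.comp
    (ContinuousLinearMap.pi fun i : Fin n =>
      ∑ j : Fin n, (T i j).comp (ContinuousLinearMap.proj j))).comp
    (PiLp.continuousLinearEquiv 2 ℂ fun _ : Fin n => H).toContinuousLinearMap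

/-- The norm `‖·‖ₙ` on `Mₙ(B(H))`, i.e. the operator norm of the associated operator
on `B(Hⁿ)`. -/
def matNorm {H : Type*} [NormedAddCommGroup H] [InnerProductSpace ℂ H] {n : ℕ}
    (T : Matrix (Fin n) (Fin n) (H →L[ℂ] H)) : ℝ := ‖matCLM T‖

/-- Positivity of a matrix of operators, i.e. positivity of the associated operator on `Hⁿ`. -/
def matPos {H : Type*} [NormedAddCommGroup H] [InnerProductSpace ℂ H] [CompleteSpace H] {n : ℕ}
    (T : Matrix (Fin n) (Fin n) (H →L[ℂ] H)) : Prop := (matCLM T).IsPositive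

section MatrixOfOperators

variable {H : Type*} [NormedAddCommGroup H] [InnerProductSpace ℂ H] {n : ℕ}

local notation "Hⁿ" => PiLp 2 fun _ : Fin n => H

@[simp]
lemma matCLM_apply (T : Matrix (Fin n) (Fin n) (H →L[ℂ] H)) (v : Hⁿ) (i : Fin n) :
    matCLM T v i = ∑ j, T i j (v j) := by
  simp [matCLM]

lemma matCLM_ext {S T : Hⁿ →L[ℂ] Hⁿ} (h : ∀ v i, S v i = T v i) : S = T :=
  ContinuousLinearMap.ext fun v => (WithLp.ext_iff 2).2 (funext (h v))

variable (H n) in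
def matCLMAlgHom : Matrix (Fin n) (Fin n) (H →L[ℂ] H) →ₐ[ℂ] (Hⁿ →L[ℂ] Hⁿ) where
  toFun := matCLM
  map_one' := matCLM_ext fun v i => by
    simp [Matrix.one_apply, apply_ite (DFunLike.coe : (H →L[ℂ] H) → H → H), ite_apply]
  map_mul' M N := matCLM_ext fun v i => by
    simp only [mul_apply_eq_comp, matCLM_apply, Matrix.mul_apply, _root_.sum_apply, map_sum]
    exact Finset.sum_comm
  map_zero' := matCLM_ext fun v i => by simp
  map_add' M N := matCLM_ext fun v i => by simp [Finset.sum_add_distrib]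
  commutes' c := matCLM_ext fun v i => by
    simp [Matrix.algebraMap_matrix_apply, apply_ite (DFunLike.coe : (H →L[ℂ] H) → H → H),
      ite_apply]

@[simp]
lemma matCLMAlgHom_apply (T : Matrix (Fin n) (Fin n) (H →L[ℂ] H)) :
    matCLMAlgHom H n T = matCLM T := rfl

def matEntry (i j : Fin n) (T : Hⁿ →L[ℂ] Hⁿ) : H →L[ℂ] H :=
  ContinuousLinearMap.proj i ∘L
    (PiLp.continuousLinearEquiv 2 ℂ fun _ : Fin n => H).toContinuousLinearMap ∘L T ∘L
    (PiLp.continuousLinearEquiv 2 ℂ fun _ : Fin n => H).symm.toContinuousLinearMap ∘L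
    ContinuousLinearMap.single ℂ (fun _ : Fin n => H) j

lemma matEntry_apply (i j : Fin n) (T : Hⁿ →L[ℂ] Hⁿ) (x : H) :
    matEntry i j T x = T (PiLp.single 2 j x) i := rfl

lemma continuous_matEntry (i j : Fin n) : Continuous (matEntry (H := H) i j) := by
  unfold matEntry
  fun_prop

@[simp]
lemma matEntry_matCLM (T : Matrix (Fin n) (Fin n) (H →L[ℂ] H)) (i j : Fin n) :
    matEntry i j (matCLM T) = T i j := by
  ext x
  simp [matEntry_apply, apply_ite]

lemma matCLM_of_matEntry (T : Hⁿ →L[ℂ] Hⁿ) :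
    matCLM (Matrix.of fun i j => matEntry i j T) = T := by
  refine matCLM_ext fun v i => ?_
  conv_rhs => rw [← WithLp.toLp_ofLp 2 v, ← Finset.univ_sum_single (WithLp.ofLp v)]
  simp [WithLp.toLp_sum, map_sum, matEntry_apply]

end MatrixOfOperators

section RangeOfMatrixAmplification

variable {A : Type*} [Ring A] [Algebra ℂ A]
  {H : Type*} [NormedAddCommGroup H] [InnerProductSpace ℂ H] {n : ℕ}
  (π : A →ₐ[ℂ] (H →L[ℂ] H))

lemma range_matCLMAlgHom_comp_mapMatrix :
    Set.range ((matCLMAlgHom H n).comp π.mapMatrix) =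
      ⋂ (i : Fin n) (j : Fin n), matEntry i j ⁻¹' Set.range π := by
  ext T
  simp only [Set.mem_range, Set.mem_iInter, Set.mem_preimage]
  constructor
  · rintro ⟨M, rfl⟩ i j
    exact ⟨M i j, by simp⟩
  · intro hT
    choose M hM using hT
    refine ⟨Matrix.of M, ?_⟩
    conv_rhs => rw [← matCLM_of_matEntry T]
    simp only [AlgHom.comp_apply, AlgHom.mapMatrix_apply, matCLMAlgHom_apply]
    exact congrArg matCLM (Matrix.ext hM)

lemma isClosed_range_matCLMAlgHom_comp_mapMatrix (hclosed : IsClosed (Set.range π)) :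
    IsClosed (Set.range ((matCLMAlgHom H n).comp π.mapMatrix)) := by
  rw [range_matCLMAlgHom_comp_mapMatrix]
  exact isClosed_iInter fun i => isClosed_iInter fun j =>
    hclosed.preimage (continuous_matEntry i j)

lemma injective_matCLMAlgHom_comp_mapMatrix (hinj : Function.Injective π) :
    Function.Injective ((matCLMAlgHom H n).comp π.mapMatrix) := by
  intro M N h
  ext i j
  apply hinj
  simpa using congrArg (matEntry i j) h

end RangeOfMatrixAmplification

lemma spectrum_subset_of_injective_of_isClosed_range {R B : Type*} [Ring R] [Algebra ℂ R]
    [NormedRing B] [NormedAlgebra ℂ B] [CompleteSpace B] (φ : R →ₐ[ℂ] B)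
    (hinj : Function.Injective φ) (hclosed : IsClosed (Set.range φ)) {x : R}
    (hx : ∀ z ∈ spectrum ℂ x, z.im = 0) :
    spectrum ℂ x ⊆ spectrum ℂ (φ x) := by
  let e := AlgEquiv.ofInjective φ hinj
  have : IsClosed (φ.range : Set B) := by rwa [AlgHom.coe_range]
  have hint : interior (spectrum ℂ (e x)) = ∅ := by
    rw [AlgEquiv.spectrum_eq, ← Set.subset_empty_iff]
    calc interior (spectrum ℂ x) ⊆ interior (Complex.im ⁻¹' {0}) := interior_mono hx
      _ = ∅ := by simp [Complex.interior_preimage_im]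
  intro z hz
  rw [← AlgEquiv.spectrum_eq e] at hz
  apply Subalgebra.frontier_spectrum φ.range (e x)
  rw [frontier, hint, Set.sdiff_empty]
  exact subset_closure hz

lemma Matrix.IsHermitian.im_eq_zero_of_mem_spectrum {A : Type*} [CStarAlgebra A] {m : Type*}
    [Fintype m] [DecidableEq m] {D : Matrix m m A} (hD : D.IsHermitian) {z : ℂ}
    (hz : z ∈ spectrum ℂ D) : z.im = 0 := by
  let _ : PartialOrder A := CStarAlgebra.spectralOrder A
  let _ : StarOrderedRing A := CStarAlgebra.spectralOrderedRing A
  have hsa : IsSelfAdjoint (CStarMatrix.ofMatrixStarAlgEquiv D) := hD.isSelfAdjoint.map _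
  exact hsa.im_eq_zero_of_mem_spectrum (by rwa [AlgEquiv.spectrum_eq])

lemma norm_le_matNorm_of_mem_spectrum {H : Type*} [NormedAddCommGroup H] [InnerProductSpace ℂ H]
    [CompleteSpace H] {n : ℕ} (T : Matrix (Fin n) (Fin n) (H →L[ℂ] H)) {z : ℂ}
    (hz : z ∈ spectrum ℂ (matCLM T)) : ‖z‖ ≤ matNorm T := by
  rcases subsingleton_or_nontrivial (PiLp 2 fun _ : Fin n => H) with h | h
  · simp [spectrum.of_subsingleton] at hz
  · exact spectrum.norm_le_norm_of_mem hz

theorem stmt13_general {A : Type*} [NormedRing A] [StarRing A] [CStarRing A] [CompleteSpace A]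
    [NormedAlgebra ℂ A] [StarModule ℂ A]
    {H : Type*} [NormedAddCommGroup H] [InnerProductSpace ℂ H] [CompleteSpace H]
    (π : A →ₐ[ℂ] (H →L[ℂ] H))
    (hinj : Function.Injective ⇑π)
    (hclosed : IsClosed (Set.range ⇑π)) :
    ∀ (n : ℕ), 0 < n → ∀ D : Matrix (Fin n) (Fin n) A, Dᴴ = D →
      (((matNorm (D.map ⇑π) : ℝ) : ℂ) • (1 : Matrix (Fin n) (Fin n) A) + D)ᴴ =
          ((matNorm (D.map ⇑π) : ℝ) : ℂ) • (1 : Matrix (Fin n) (Fin n) A) + D ∧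
      spectrum ℂ (((matNorm (D.map ⇑π) : ℝ) : ℂ) • (1 : Matrix (Fin n) (Fin n) A) + D) ⊆
        {z : ℂ | ∃ r : ℝ, 0 ≤ r ∧ z = (r : ℂ)} := by
  intro n _ D hD
  set c := matNorm (D.map π)
  refine ⟨by simp [hD, Matrix.conjTranspose_smul], fun z hz => ?_⟩
  let _ : CStarAlgebra A := { }
  have hreal : ∀ w ∈ spectrum ℂ D, w.im = 0 := fun _ =>
    Matrix.IsHermitian.im_eq_zero_of_mem_spectrum hD
  obtain ⟨w, hw, rfl⟩ : ∃ w ∈ spectrum ℂ D, z = c + w := by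
    refine ⟨z - c, ?_, by ring⟩
    rwa [← spectrum.add_mem_add_iff (s := (c : ℂ)), sub_add_cancel,
      Algebra.algebraMap_eq_smul_one]
  have hwΦ : w ∈ spectrum ℂ (matCLM (D.map π)) :=
    spectrum_subset_of_injective_of_isClosed_range _
      (injective_matCLMAlgHom_comp_mapMatrix π hinj)
      (isClosed_range_matCLMAlgHom_comp_mapMatrix π hclosed) hreal hw
  have hwc : ‖w‖ ≤ c := norm_le_matNorm_of_mem_spectrum _ hwΦ
  refine ⟨c + w.re, by linarith [neg_abs_le w.re, Complex.abs_re_le_norm w], ?_⟩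
  apply Complex.ext <;> simp [hreal w hw]

/-- If `π : A → B(H)` is a bounded, unital, injective algebra homomorphism of a
unital `C*`-algebra with norm-closed range, then for every self-adjoint `D ∈ Mₙ(A)` the element
`‖π⁽ⁿ⁾(D)‖·1 + D` is positive in the `C*`-algebra `Mₙ(A)` (i.e. it is self-adjoint and its
spectrum consists of nonnegative reals). -/
theorem stmt13 {A : Type*} [NormedRing A] [StarRing A] [CStarRing A] [CompleteSpace A]
    [NormedAlgebra ℂ A] [StarModule ℂ A]
    {H : Type*} [NormedAddCommGroup H] [InnerProductSpace ℂ H] [CompleteSpace H]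
    (π : A →ₐ[ℂ] (H →L[ℂ] H))
    (hbdd : ∃ M₀ : ℝ, ∀ a : A, ‖π a‖ ≤ M₀ * ‖a‖)
    (hinj : Function.Injective ⇑π)
    (hclosed : IsClosed (Set.range ⇑π)) :
    ∀ (n : ℕ), 0 < n → ∀ D : Matrix (Fin n) (Fin n) A, Dᴴ = D →
      (((matNorm (D.map ⇑π) : ℝ) : ℂ) • (1 : Matrix (Fin n) (Fin n) A) + D)ᴴ =
          ((matNorm (D.map ⇑π) : ℝ) : ℂ) • (1 : Matrix (Fin n) (Fin n) A) + D ∧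
      spectrum ℂ (((matNorm (D.map ⇑π) : ℝ) : ℂ) • (1 : Matrix (Fin n) (Fin n) A) + D) ⊆
        {z : ℂ | ∃ r : ℝ, 0 ≤ r ∧ z = (r : ℂ)} :=
  stmt13_general π hinj hclosed
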